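/- arXiv:1111.6337 — 6 statements merged into one kernel-verified Lean document; each statement's English description precedes it below -/
import Mathlib

section
/- Under the improved-FTRL updates with step size η ∈ (0,1], the regret satisfies ∑_{t=1}^T c_t(x_t) − min_{x∈𝒫} ∑_{t=1}^T c_t(x) ≤ L/(2η) + (η/(2L))·EVAR, where EVAR = ∑_{t=0}^{T−1} ‖∇c_{t+1}(z_t) − ∇c_t(z_t)‖₂². -/
/-!
Put `r = L / (2η)`, `gₜ = ∇cₜ(zₜ₋₁)` and `mₜ = ∇cₜ₋₁(zₜ₋₁)`. Convexity of `cₜ` at `zₜ₋₁` and the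
descent lemma give `cₜ(xₜ) - cₜ(x⋆) ≤ ⟪gₜ, xₜ - x⋆⟫ + r ‖xₜ - zₜ₋₁‖²`, since `L/2 ≤ r` for `η ≤ 1`.
Both updates minimise a linear function plus `r ‖· - b‖²` over the convex set `P`, so each
satisfies the three-point inequality. Testing the ones for `xₜ` and for `zₜ₋₁` at `zₜ` and
applying Young's inequality to `⟪gₜ - mₜ, xₜ - zₜ⟫` bounds `⟪gₜ, xₜ⟫ + r ‖xₜ - zₜ₋₁‖²` by
`‖gₜ - mₜ‖² / (4r)` plus the increment of the potential `Φₜ = ⟪g₁ + ⋯ + gₜ, zₜ⟫ + r ‖zₜ‖²`. The potential telescopes, `Φ₀ ≥ 0`, and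
`Φ_T ≤ ⟪g₁ + ⋯ + g_T, x⋆⟫ + r ‖x⋆‖²` by minimality of `z_T`, with `‖x⋆‖ ≤ 1`.
-/

open Finset
open scoped RealInnerProductSpace

abbrev Euc (d : ℕ) := EuclideanSpace ℝ (Fin d)

theorem sum_Icc_one_eq_sum_range {M : Type*} [AddCommMonoid M] (f : ℕ → M) (n : ℕ) :
    ∑ i ∈ Icc 1 n, f i = ∑ i ∈ range n, f (i + 1) := by
  rw [range_eq_Ico, sum_Ico_add', zero_add, Ico_add_one_right_eq_Icc]

section
variable {E : Type*} [NormedAddCommGroup E] [InnerProductSpace ℝ E] {P : Set E} {r : ℝ}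

theorem real_inner_sub_mul_sq_norm_le (hr : 0 < r) (a b : E) :
    ⟪a, b⟫ - r * ‖b‖ ^ 2 ≤ 1 / (4 * r) * ‖a‖ ^ 2 := by
  calc ⟪a, b⟫ - r * ‖b‖ ^ 2 ≤ ‖a‖ * ‖b‖ - r * ‖b‖ ^ 2 := by linarith [real_inner_le_norm a b]
    _ ≤ 1 / (4 * r) * ‖a‖ ^ 2 := by
      rw [one_div_mul_eq_div, le_div_iff₀ (by positivity)]
      nlinarith [sq_nonneg (‖a‖ - 2 * r * ‖b‖)]

theorem IsMinOn.three_point (hP : Convex ℝ P) {a b w u : E}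
    (hmin : IsMinOn (fun u => ⟪a, u⟫ + r * ‖u - b‖ ^ 2) P w) (hw : w ∈ P) (hu : u ∈ P) :
    ⟪a, w⟫ + r * ‖w - b‖ ^ 2 + r * ‖u - w‖ ^ 2 ≤ ⟪a, u⟫ + r * ‖u - b‖ ^ 2 := by
  have hderiv : HasFDerivAt (fun u => ⟪a, u⟫ + r * ‖u - b‖ ^ 2)
      (innerSL ℝ (a + (2 * r) • (w - b))) w := by
    refine ((innerSL ℝ a).hasFDerivAt.add
      (((hasFDerivAt_id w).sub_const b).norm_sq.const_mul r)).congr_fderiv ?_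
    ext v
    simp only [id_eq, map_sub, ContinuousLinearMap.comp_id, add_apply,
      coe_innerSL_apply, smul_apply, sub_apply,
      nsmul_eq_mul, smul_eq_mul, map_add, map_smul]
    ring
  have hfirst : 0 ≤ ⟪a, u - w⟫ + 2 * r * ⟪w - b, u - w⟫ := by
    have := hmin.localize.hasFDerivWithinAt_nonneg hderiv.hasFDerivWithinAt
      (sub_mem_posTangentConeAt_of_segment_subset (hP.segment_subset hw hu))
    simpa only [coe_innerSL_apply, inner_add_left, real_inner_smul_left] using this
  have hexpand : ‖u - b‖ ^ 2 = ‖w - b‖ ^ 2 + 2 * ⟪w - b, u - w⟫ + ‖u - w‖ ^ 2 := by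
    rw [← norm_add_sq_real, add_comm, sub_add_sub_cancel]
  rw [inner_sub_right] at hfirst
  rw [hexpand]
  linarith

theorem optimistic_ftrl_step (hP : Convex ℝ P) (hr : 0 < r) {G g m z z' w : E}
    (hz : z ∈ P) (hz' : z' ∈ P) (hw : w ∈ P)
    (hzmin : IsMinOn (fun u => ⟪G, u⟫ + r * ‖u‖ ^ 2) P z)
    (hwmin : IsMinOn (fun u => ⟪m, u⟫ + r * ‖u - z‖ ^ 2) P w) :
    ⟪g, w⟫ + r * ‖w - z‖ ^ 2
      ≤ (⟪G + g, z'⟫ + r * ‖z'‖ ^ 2) - (⟪G, z⟫ + r * ‖z‖ ^ 2) + 1 / (4 * r) * ‖g - m‖ ^ 2 := by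
  have hzstep := (show IsMinOn (fun u => ⟪G, u⟫ + r * ‖u - 0‖ ^ 2) P z by simpa using hzmin)
    |>.three_point hP hz hz'
  have hwstep := hwmin.three_point hP hw hz'
  have hyoung := real_inner_sub_mul_sq_norm_le hr (g - m) (w - z')
  rw [sub_zero, sub_zero] at hzstep
  rw [norm_sub_rev z' w] at hwstep
  simp only [inner_add_left, inner_sub_left, inner_sub_right] at hyoung ⊢
  linarith

theorem optimistic_ftrl_linear_regret (hP : Convex ℝ P) (hr : 0 < r) {T : ℕ}
    {g m z w : ℕ → E} {xs : E}
    (hz : ∀ t ≤ T, z t ∈ P ∧ IsMinOn (fun u => ⟪∑ i ∈ range t, g i, u⟫ + r * ‖u‖ ^ 2) P (z t))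
    (hw : ∀ i < T, w i ∈ P ∧ IsMinOn (fun u => ⟪m i, u⟫ + r * ‖u - z i‖ ^ 2) P (w i))
    (hxs : xs ∈ P) :
    ∑ i ∈ range T, (⟪g i, w i - xs⟫ + r * ‖w i - z i‖ ^ 2)
      ≤ r * ‖xs‖ ^ 2 + 1 / (4 * r) * ∑ i ∈ range T, ‖g i - m i‖ ^ 2 := by
  set Φ : ℕ → ℝ := fun t => ⟪∑ i ∈ range t, g i, z t⟫ + r * ‖z t‖ ^ 2
  have hstep : ∀ i ∈ range T, ⟪g i, w i⟫ + r * ‖w i - z i‖ ^ 2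
      ≤ Φ (i + 1) - Φ i + 1 / (4 * r) * ‖g i - m i‖ ^ 2 := by
    intro i hi
    have hiT : i < T := mem_range.mp hi
    have hz_i := hz i hiT.le
    have hz_succ := hz (i + 1) hiT
    simpa only [Φ, sum_range_succ] using
      optimistic_ftrl_step hP hr hz_i.1 hz_succ.1 (hw i hiT).1 hz_i.2 (hw i hiT).2
  have hsum := sum_le_sum hstep
  rw [sum_add_distrib (f := fun i => Φ (i + 1) - Φ i), sum_range_sub, ← mul_sum] at hsum
  have hΦ0 : 0 ≤ Φ 0 := by simp only [Φ, range_zero, sum_empty, inner_zero_left]; positivity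
  have hΦT : Φ T ≤ ⟪∑ i ∈ range T, g i, xs⟫ + r * ‖xs‖ ^ 2 := (hz T le_rfl).2 hxs
  have hsplit : ∑ i ∈ range T, (⟪g i, w i - xs⟫ + r * ‖w i - z i‖ ^ 2)
      = ∑ i ∈ range T, (⟪g i, w i⟫ + r * ‖w i - z i‖ ^ 2) - ⟪∑ i ∈ range T, g i, xs⟫ := by
    simp only [inner_sub_right, sum_inner, sum_add_distrib, sum_sub_distrib]
    ring
  linarith

variable [CompleteSpace E] {f : E → ℝ}

theorem HasGradientAt.hasDerivAt_comp_add_smul {g p v : E} {s : ℝ}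
    (hf : HasGradientAt f g (p + s • v)) :
    HasDerivAt (fun t : ℝ => f (p + t • v)) ⟪g, v⟫ s := by
  have hline : HasDerivAt (fun t : ℝ => p + t • v) v s := by
    simpa using ((hasDerivAt_id s).smul_const v).const_add p
  simpa [Function.comp_def] using
    (hasGradientAt_iff_hasFDerivAt.mp hf).comp_hasDerivAt s hline

theorem ConvexOn.add_inner_gradient_le {s : Set E} (hf : ConvexOn ℝ s f) {p q : E}
    (hp : p ∈ s) (hq : q ∈ s) (hd : DifferentiableAt ℝ f p) :
    f p + ⟪gradient f p, q - p⟫ ≤ f q := by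
  have hline : ConvexOn ℝ (AffineMap.lineMap p q ⁻¹' s) (fun t : ℝ => f (p + t • (q - p))) := by
    have hcomp : (fun t : ℝ => f (p + t • (q - p))) = f ∘ AffineMap.lineMap p q := by
      funext t
      rw [Function.comp_apply, AffineMap.lineMap_apply, vsub_eq_sub, vadd_eq_add, add_comm]
    exact hcomp ▸ hf.comp_affineMap _
  have hderiv : HasDerivAt (fun t : ℝ => f (p + t • (q - p))) ⟪gradient f p, q - p⟫ 0 :=
    HasGradientAt.hasDerivAt_comp_add_smul (by simpa using hd.hasGradientAt)
  have := hline.le_slope_of_hasDerivAt (by simpa using hp) (by simpa using hq) one_pos hderiv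
  rw [slope_def_field, sub_zero, div_one, one_smul, zero_smul, add_zero, add_sub_cancel] at this
  linarith

theorem Convex.le_add_inner_gradient_add_sq {s : Set E} (hs : Convex ℝ s) {L : ℝ}
    (hd : ∀ u ∈ s, DifferentiableAt ℝ f u)
    (hlip : ∀ u ∈ s, ∀ v ∈ s, ‖gradient f u - gradient f v‖ ≤ L * ‖u - v‖)
    {p q : E} (hp : p ∈ s) (hq : q ∈ s) :
    f q ≤ f p + ⟪gradient f p, q - p⟫ + L / 2 * ‖q - p‖ ^ 2 := by
  set v := q - p
  have hmem : ∀ t ∈ Set.Icc (0 : ℝ) 1, p + t • v ∈ s := fun t ht => hs.add_smul_sub_mem hp hq ht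
  set ψ : ℝ → ℝ := fun t => f (p + t • v) - t * ⟪gradient f p, v⟫ - L / 2 * t ^ 2 * ‖v‖ ^ 2
  have hψ : ∀ t ∈ Set.Icc (0 : ℝ) 1, HasDerivAt ψ
      (⟪gradient f (p + t • v), v⟫ - ⟪gradient f p, v⟫ - L * t * ‖v‖ ^ 2) t := by
    intro t ht
    exact ((((hd _ (hmem t ht)).hasGradientAt.hasDerivAt_comp_add_smul).sub
      ((hasDerivAt_id t).mul_const _)).sub
      (((hasDerivAt_pow 2 t).const_mul (L / 2)).mul_const (‖v‖ ^ 2))).congr_deriv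
      (by rw [Nat.add_one_sub_one, pow_one]; push_cast; ring)
  have hanti : AntitoneOn ψ (Set.Icc 0 1) := by
    refine antitoneOn_of_hasDerivWithinAt_nonpos (convex_Icc 0 1)
      (fun t ht => (hψ t ht).continuousAt.continuousWithinAt)
      (fun t ht => (hψ t (interior_subset ht)).hasDerivWithinAt) fun t ht => ?_
    rw [interior_Icc] at ht
    have hgrad : ⟪gradient f (p + t • v) - gradient f p, v⟫ ≤ L * t * ‖v‖ ^ 2 :=
      calc ⟪gradient f (p + t • v) - gradient f p, v⟫
          ≤ ‖gradient f (p + t • v) - gradient f p‖ * ‖v‖ := real_inner_le_norm _ _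
        _ ≤ L * ‖(p + t • v) - p‖ * ‖v‖ := by
          gcongr
          exact hlip _ (hmem t (Set.Ioo_subset_Icc_self ht)) _ hp
        _ = L * t * ‖v‖ ^ 2 := by
          rw [add_sub_cancel_left, norm_smul, Real.norm_of_nonneg ht.1.le]
          ring
    rw [inner_sub_left] at hgrad
    linarith
  have h := hanti (Set.left_mem_Icc.mpr zero_le_one) (Set.right_mem_Icc.mpr zero_le_one)
    zero_le_one
  have hψ0 : ψ 0 = f p := by simp [ψ]
  have hψ1 : ψ 1 = f q - ⟪gradient f p, v⟫ - L / 2 * ‖v‖ ^ 2 := by simp [ψ, v]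
  linarith

theorem ConvexOn.sub_le_inner_gradient_add_sq {s : Set E} (hf : ConvexOn ℝ s f) {L : ℝ}
    (hd : ∀ u ∈ s, DifferentiableAt ℝ f u)
    (hlip : ∀ u ∈ s, ∀ v ∈ s, ‖gradient f u - gradient f v‖ ≤ L * ‖u - v‖)
    {p q x : E} (hp : p ∈ s) (hq : q ∈ s) (hx : x ∈ s) :
    f q - f x ≤ ⟪gradient f p, q - x⟫ + L / 2 * ‖q - p‖ ^ 2 := by
  have hupper := hf.1.le_add_inner_gradient_add_sq hd hlip hp hq
  have hlower := hf.add_inner_gradient_le hp hx (hd p hp)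
  have hsplit : ⟪gradient f p, q - p⟫ = ⟪gradient f p, q - x⟫ + ⟪gradient f p, x - p⟫ := by
    rw [← inner_add_right, sub_add_sub_cancel]
  linarith

theorem optimistic_ftrl_regret (hP : Convex ℝ P) (hr : 0 < r) {L : ℝ} (hLr : L / 2 ≤ r) {T : ℕ}
    {ℓ : ℕ → E → ℝ} {m z w : ℕ → E} {xs : E}
    (hconv : ∀ i < T, ConvexOn ℝ P (ℓ i)) (hdiff : ∀ i < T, ∀ u ∈ P, DifferentiableAt ℝ (ℓ i) u)
    (hlip : ∀ i < T, ∀ u ∈ P, ∀ v ∈ P, ‖gradient (ℓ i) u - gradient (ℓ i) v‖ ≤ L * ‖u - v‖)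
    (hz : ∀ t ≤ T, z t ∈ P ∧
      IsMinOn (fun u => ⟪∑ i ∈ range t, gradient (ℓ i) (z i), u⟫ + r * ‖u‖ ^ 2) P (z t))
    (hw : ∀ i < T, w i ∈ P ∧ IsMinOn (fun u => ⟪m i, u⟫ + r * ‖u - z i‖ ^ 2) P (w i))
    (hxs : xs ∈ P) :
    ∑ i ∈ range T, (ℓ i (w i) - ℓ i xs)
      ≤ r * ‖xs‖ ^ 2 + 1 / (4 * r) * ∑ i ∈ range T, ‖gradient (ℓ i) (z i) - m i‖ ^ 2 := by
  refine le_trans (sum_le_sum fun i hi => ?_) (optimistic_ftrl_linear_regret hP hr hz hw hxs)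
  have hiT : i < T := mem_range.mp hi
  have hsmooth := (hconv i hiT).sub_le_inner_gradient_add_sq (hdiff i hiT) (hlip i hiT)
    (hz i hiT.le).1 (hw i hiT).1 hxs
  nlinarith [mul_le_mul_of_nonneg_right hLr (sq_nonneg ‖w i - z i‖)]

end

theorem improved_ftrl_regret_bound_general {d T : ℕ}
    (P : Set (Euc d)) (hPconv : Convex ℝ P)
    (hPball : P ⊆ Metric.closedBall 0 1) (h0P : (0 : Euc d) ∈ P)
    (c : ℕ → Euc d → ℝ)
    (L : ℝ) (hL : 0 < L)
    (hconv : ∀ t, 1 ≤ t → t ≤ T → ConvexOn ℝ Set.univ (c t))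
    (hdiff : ∀ t, 1 ≤ t → t ≤ T → Differentiable ℝ (c t))
    (hlip : ∀ t, 1 ≤ t → t ≤ T → ∀ u ∈ P, ∀ v ∈ P,
      ‖gradient (c t) u - gradient (c t) v‖ ≤ L * ‖u - v‖)
    (η : ℝ) (hη0 : 0 < η) (hη1 : η ≤ 1)
    (x z : ℕ → Euc d) (hz0 : z 0 = 0)
    (hx : ∀ t, 1 ≤ t → t ≤ T → x t ∈ P ∧
      IsMinOn (fun u => ⟪gradient (c (t - 1)) (z (t - 1)), u⟫
        + L / (2 * η) * ‖u - z (t - 1)‖ ^ 2) P (x t))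
    (hz : ∀ t, 1 ≤ t → t ≤ T → z t ∈ P ∧
      IsMinOn (fun u => (∑ τ ∈ Finset.Icc 1 t, ⟪gradient (c τ) (z (τ - 1)), u⟫)
        + L / (2 * η) * ‖u‖ ^ 2) P (z t))
    (xstar : Euc d) (hxstar : xstar ∈ P) :
    (∑ t ∈ Finset.Icc 1 T, c t (x t)) - (∑ t ∈ Finset.Icc 1 T, c t xstar)
      ≤ L / (2 * η) + η / (2 * L) *
        ∑ t ∈ Finset.range T, ‖gradient (c (t + 1)) (z t) - gradient (c t) (z t)‖ ^ 2 := by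
  set r := L / (2 * η) with hr_def
  have hr : 0 < r := by positivity
  have hz' : ∀ t ≤ T, z t ∈ P ∧ IsMinOn
      (fun u => ⟪∑ i ∈ range t, gradient (c (i + 1)) (z i), u⟫ + r * ‖u‖ ^ 2) P (z t) := by
    intro t ht
    rcases Nat.eq_zero_or_pos t with rfl | ht0
    · exact ⟨hz0 ▸ h0P, fun u _ => by simpa [hz0] using mul_nonneg hr.le (sq_nonneg ‖u‖)⟩
    · simpa only [sum_Icc_one_eq_sum_range, sum_inner, Nat.add_sub_cancel] using hz t ht0 ht
  have hregret := optimistic_ftrl_regret hPconv hr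
    (div_le_div_of_nonneg_left hL.le (by positivity) (by linarith))
    (fun i hi => (hconv (i + 1) (by omega) hi).subset (Set.subset_univ P) hPconv)
    (fun i hi u _ => hdiff (i + 1) (by omega) hi u) (fun i hi => hlip (i + 1) (by omega) hi) hz'
    (fun i hi => by simpa only [Nat.add_sub_cancel] using hx (i + 1) (by omega) hi) hxstar
  have hxstar_sq : ‖xstar‖ ^ 2 ≤ 1 := pow_le_one₀ (norm_nonneg _) (by simpa using hPball hxstar)
  have hcoef : 1 / (4 * r) = η / (2 * L) := by rw [hr_def]; field_simp; ring
  rw [sum_Icc_one_eq_sum_range, sum_Icc_one_eq_sum_range, ← sum_sub_distrib, ← hcoef]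
  linarith [mul_le_of_le_one_right hr.le hxstar_sq]

/-- Regret bound for the improved FTRL algorithm with step size `η ∈ (0,1]`. -/
theorem improved_ftrl_regret_bound {d T : ℕ} (hT : 1 ≤ T)
    (P : Set (Euc d)) (hPconv : Convex ℝ P) (hPcl : IsClosed P)
    (hPball : P ⊆ Metric.closedBall 0 1) (h0P : (0 : Euc d) ∈ P)
    (c : ℕ → Euc d → ℝ) (hc0 : c 0 = fun _ => (0 : ℝ))
    (L : ℝ) (hL : 0 < L)
    (hconv : ∀ t, 1 ≤ t → t ≤ T → ConvexOn ℝ Set.univ (c t))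
    (hdiff : ∀ t, 1 ≤ t → t ≤ T → Differentiable ℝ (c t))
    (hlip : ∀ t, 1 ≤ t → t ≤ T → ∀ u ∈ P, ∀ v ∈ P,
      ‖gradient (c t) u - gradient (c t) v‖ ≤ L * ‖u - v‖)
    (η : ℝ) (hη0 : 0 < η) (hη1 : η ≤ 1)
    (x z : ℕ → Euc d) (hz0 : z 0 = 0)
    (hx : ∀ t, 1 ≤ t → t ≤ T → x t ∈ P ∧
      IsMinOn (fun u => ⟪gradient (c (t - 1)) (z (t - 1)), u⟫
        + L / (2 * η) * ‖u - z (t - 1)‖ ^ 2) P (x t))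
    (hz : ∀ t, 1 ≤ t → t ≤ T → z t ∈ P ∧
      IsMinOn (fun u => (∑ τ ∈ Finset.Icc 1 t, ⟪gradient (c τ) (z (τ - 1)), u⟫)
        + L / (2 * η) * ‖u‖ ^ 2) P (z t))
    (xstar : Euc d) (hxstar : xstar ∈ P)
    (hmin : IsMinOn (fun u => ∑ t ∈ Finset.Icc 1 T, c t u) P xstar) :
    (∑ t ∈ Finset.Icc 1 T, c t (x t)) - (∑ t ∈ Finset.Icc 1 T, c t xstar)
      ≤ L / (2 * η) + η / (2 * L) *
        ∑ t ∈ Finset.range T, ‖gradient (c (t + 1)) (z t) - gradient (c t) (z t)‖ ^ 2 :=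
  improved_ftrl_regret_bound_general P hPconv hPball h0P c L hL hconv hdiff hlip η hη0 hη1 x z hz0
    hx hz xstar hxstar
end

section
/- (Lemma 1) For any η ∈ (0,1], the improved-FTRL updates satisfy ∑_{t=1}^T c_t(x_t) ≤ min_{x∈𝒫} [ (L/(2η))‖x‖₂² + ∑_{t=1}^T ( c_t(z_{t−1}) + ⟨∇c_t(z_{t−1}), x − z_{t−1}⟩ ) ] + (η/(2L)) ∑_{t=0}^{T−1} ‖∇c_{t+1}(z_t) − ∇c_t(z_t)‖₂². -/
open Finset
open scoped RealInnerProductSpace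

/-!
Write `K = L/(2η)`, so that `L/2 ≤ K` because `η ≤ 1`, and `g_t = ∇c_t(z_{t-1})`. In round `t`
the descent lemma for `c_t` at `z_{t-1}`, the three-point inequality for the prox step `x_t`
(compared with `z_t`) and Young's inequality give
`c_t(x_t) ≤ c_t(z_{t-1}) + ⟨g_t, z_t - z_{t-1}⟩ + K‖z_t - z_{t-1}‖² + ‖g_t - ∇c_{t-1}(z_{t-1})‖²/(4K)`,
and `1/(4K) = η/(2L)`. Summed over `t`, the terms `⟨g_t, z_t⟩ + K‖z_t - z_{t-1}‖²` are bounded by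
the be-the-leader argument: the three-point inequality for the FTRL iterates telescopes to the
FTRL objective at `z_T`, which is at most its value at any `u ∈ P`.
-/

section

variable {E : Type*} [NormedAddCommGroup E] [InnerProductSpace ℝ E]

theorem IsMinOn.prox_three_point {P : Set E} (hP : Convex ℝ P) {a w p y : E} {K : ℝ}
    (hmin : IsMinOn (fun v => ⟪a, v⟫ + K * ‖v - w‖ ^ 2) P p) (hp : p ∈ P) (hy : y ∈ P) :
    ⟪a, p⟫ + K * ‖p - w‖ ^ 2 + K * ‖y - p‖ ^ 2 ≤ ⟪a, y⟫ + K * ‖y - w‖ ^ 2 := by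
  have hderiv : HasFDerivAt (fun v => ⟪a, v⟫ + K * ‖v - w‖ ^ 2)
      (innerSL ℝ a + K • (2 • innerSL ℝ (p - w))) p :=
    (innerSL ℝ a).hasFDerivAt.add (((hasFDerivAt_id p).sub_const w).norm_sq.const_mul K)
  -- first-order optimality of `p` in the direction `y - p`; the rest is an exact identity
  have hfirst : 0 ≤ ⟪a, y - p⟫ + K * (2 * ⟪p - w, y - p⟫) := by
    simpa [inner_sub_left] using hmin.localize.hasFDerivWithinAt_nonneg hderiv.hasFDerivWithinAt
      (sub_mem_posTangentConeAt_of_segment_subset (hP.segment_subset hp hy))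
  have hsplit : ‖y - w‖ ^ 2 = ‖p - w‖ ^ 2 + 2 * ⟪p - w, y - p⟫ + ‖y - p‖ ^ 2 := by
    rw [← norm_add_sq_real, sub_add_sub_cancel']
  rw [inner_sub_right] at hfirst
  rw [hsplit]
  linarith

theorem real_inner_le_norm_sq_div_add_mul_norm_sq {K : ℝ} (hK : 0 < K) (a b : E) :
    ⟪a, b⟫ ≤ ‖a‖ ^ 2 / (4 * K) + K * ‖b‖ ^ 2 := by
  have hsq : 0 ≤ (‖a‖ - 2 * K * ‖b‖) ^ 2 / (4 * K) := by positivity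
  have hexp : (‖a‖ - 2 * K * ‖b‖) ^ 2 / (4 * K) = ‖a‖ ^ 2 / (4 * K) + K * ‖b‖ ^ 2 - ‖a‖ * ‖b‖ := by
    field_simp; ring
  linarith [real_inner_le_norm a b]

theorem descent_lemma [CompleteSpace E] {f : E → ℝ} (hf : Differentiable ℝ f) {L : ℝ}
    {P : Set E} (hP : Convex ℝ P)
    (hlip : ∀ u ∈ P, ∀ v ∈ P, ‖gradient f u - gradient f v‖ ≤ L * ‖u - v‖)
    {p q : E} (hp : p ∈ P) (hq : q ∈ P) :
    f q ≤ f p + ⟪gradient f p, q - p⟫ + L / 2 * ‖q - p‖ ^ 2 := by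
  set v := q - p
  have hψ (s : ℝ) : HasDerivAt
      (fun s : ℝ => f (p + s • v) - s * ⟪gradient f p, v⟫ - L / 2 * s ^ 2 * ‖v‖ ^ 2)
      (⟪gradient f (p + s • v), v⟫ - ⟪gradient f p, v⟫ - L * s * ‖v‖ ^ 2) s := by
    have hline : HasDerivAt (fun s : ℝ => p + s • v) v s := by
      simpa using ((hasDerivAt_id s).smul_const v).const_add p
    have hfline := (hf (p + s • v)).hasGradientAt.hasFDerivAt.comp_hasDerivAt s hline
    rw [InnerProductSpace.toDual_apply_apply] at hfline
    exact ((hfline.sub ((hasDerivAt_id s).mul_const _)).sub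
      (((hasDerivAt_pow 2 s).const_mul (L / 2)).mul_const (‖v‖ ^ 2))).congr_deriv
      (by simp only [Nat.cast_ofNat, Nat.reduceSub, pow_one, one_mul]; ring)
  obtain ⟨s, hs, hslope⟩ := exists_hasDerivAt_eq_slope _ _ zero_lt_one
    (fun s _ => (hψ s).continuousAt.continuousWithinAt) (fun s _ => hψ s)
  have hmem : p + s • v ∈ P := by
    simpa [v] using hP.add_smul_sub_mem hp hq ⟨hs.1.le, hs.2.le⟩
  have hgrad : ⟪gradient f (p + s • v) - gradient f p, v⟫ ≤ L * s * ‖v‖ ^ 2 :=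
    calc ⟪gradient f (p + s • v) - gradient f p, v⟫
        ≤ ‖gradient f (p + s • v) - gradient f p‖ * ‖v‖ := real_inner_le_norm _ _
      _ ≤ L * ‖s • v‖ * ‖v‖ := by gcongr; simpa using hlip _ hmem _ hp
      _ = L * s * ‖v‖ ^ 2 := by rw [norm_smul, Real.norm_of_nonneg hs.1.le]; ring
  rw [inner_sub_left] at hgrad
  simp only [one_smul, zero_smul, add_zero, add_sub_cancel, sub_zero, div_one, one_pow, mul_one,
    one_mul, zero_mul, zero_pow two_ne_zero, mul_zero, v] at hslope
  linarith

theorem optimistic_prox_step_le [CompleteSpace E] {f : E → ℝ} (hf : Differentiable ℝ f)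
    {L K : ℝ} (hK : 0 < K) (hLK : L / 2 ≤ K) {P : Set E} (hP : Convex ℝ P)
    (hlip : ∀ u ∈ P, ∀ v ∈ P, ‖gradient f u - gradient f v‖ ≤ L * ‖u - v‖)
    {h w x z : E} (hw : w ∈ P) (hx : x ∈ P)
    (hxmin : IsMinOn (fun v => ⟪h, v⟫ + K * ‖v - w‖ ^ 2) P x) (hz : z ∈ P) :
    f x ≤ f w + ⟪gradient f w, z - w⟫ + K * ‖z - w‖ ^ 2
      + ‖gradient f w - h‖ ^ 2 / (4 * K) := by
  have hdescent := descent_lemma hf hP hlip hw hx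
  have hthree := hxmin.prox_three_point hP hx hz
  have hyoung := real_inner_le_norm_sq_div_add_mul_norm_sq hK (gradient f w - h) (x - z)
  have hsmooth : L / 2 * ‖x - w‖ ^ 2 ≤ K * ‖x - w‖ ^ 2 := by gcongr
  rw [norm_sub_rev z x] at hthree
  simp only [inner_sub_left, inner_sub_right] at hdescent hyoung ⊢
  linarith

theorem ftrl_be_the_leader {P : Set E} (hP : Convex ℝ P) {K : ℝ} (g z : ℕ → E) {T : ℕ}
    (hz : ∀ t ≤ T, z t ∈ P ∧
      IsMinOn (fun v => (∑ τ ∈ Icc 1 t, ⟪g τ, v⟫) + K * ‖v‖ ^ 2) P (z t))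
    {y : E} (hy : y ∈ P) :
    ∑ τ ∈ Icc 1 T, (⟪g τ, z τ⟫ + K * ‖z τ - z (τ - 1)‖ ^ 2) + K * ‖z 0‖ ^ 2
      ≤ (∑ τ ∈ Icc 1 T, ⟪g τ, y⟫) + K * ‖y‖ ^ 2 := by
  have hleader : ∀ t ≤ T, ∑ τ ∈ Icc 1 t, (⟪g τ, z τ⟫ + K * ‖z τ - z (τ - 1)‖ ^ 2)
      + K * ‖z 0‖ ^ 2 ≤ (∑ τ ∈ Icc 1 t, ⟪g τ, z t⟫) + K * ‖z t‖ ^ 2 := by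
    intro t
    induction t with
    | zero => simp
    | succ t ih =>
      intro ht
      have hprox : IsMinOn (fun v => ⟪∑ τ ∈ Icc 1 t, g τ, v⟫ + K * ‖v - 0‖ ^ 2) P (z t) := by
        simpa only [sum_inner, sub_zero] using (hz t (by omega)).2
      have hthree := hprox.prox_three_point hP (hz t (by omega)).1 (hz (t + 1) ht).1
      simp only [sum_inner, sub_zero] at hthree
      rw [sum_Icc_succ_top (by omega), sum_Icc_succ_top (by omega), Nat.add_sub_cancel]
      linarith [ih (by omega)]
  exact (hleader T le_rfl).trans ((hz T le_rfl).2 hy)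

end

theorem improved_ftrl_lemma_one_general {d T : ℕ}
    (P : Set (Euc d)) (hPconv : Convex ℝ P)
    (h0P : (0 : Euc d) ∈ P)
    (c : ℕ → Euc d → ℝ)
    (L : ℝ) (hL : 0 < L)
    (hdiff : ∀ t, 1 ≤ t → t ≤ T → Differentiable ℝ (c t))
    (hlip : ∀ t, 1 ≤ t → t ≤ T → ∀ u ∈ P, ∀ v ∈ P,
      ‖gradient (c t) u - gradient (c t) v‖ ≤ L * ‖u - v‖)
    (η : ℝ) (hη0 : 0 < η) (hη1 : η ≤ 1)
    (x z : ℕ → Euc d) (hz0 : z 0 = 0)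
    (hx : ∀ t, 1 ≤ t → t ≤ T → x t ∈ P ∧
      IsMinOn (fun u => ⟪gradient (c (t - 1)) (z (t - 1)), u⟫
        + L / (2 * η) * ‖u - z (t - 1)‖ ^ 2) P (x t))
    (hz : ∀ t, 1 ≤ t → t ≤ T → z t ∈ P ∧
      IsMinOn (fun u => (∑ τ ∈ Finset.Icc 1 t, ⟪gradient (c τ) (z (τ - 1)), u⟫)
        + L / (2 * η) * ‖u‖ ^ 2) P (z t))
    (u : Euc d) (huP : u ∈ P) :
    ∑ t ∈ Finset.Icc 1 T, c t (x t)
      ≤ (L / (2 * η) * ‖u‖ ^ 2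
          + ∑ t ∈ Finset.Icc 1 T, (c t (z (t - 1))
            + ⟪gradient (c t) (z (t - 1)), u - z (t - 1)⟫))
        + η / (2 * L) *
          ∑ t ∈ Finset.range T, ‖gradient (c (t + 1)) (z t) - gradient (c t) (z t)‖ ^ 2 := by
  set K := L / (2 * η) with hK_def
  have hK : 0 < K := by positivity
  have hLK : L / 2 ≤ K := by rw [hK_def, le_div_iff₀ (by positivity)]; nlinarith
  have hzmin : ∀ t ≤ T, z t ∈ P ∧ IsMinOn (fun v =>
      (∑ τ ∈ Icc 1 t, ⟪gradient (c τ) (z (τ - 1)), v⟫) + K * ‖v‖ ^ 2) P (z t) := by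
    rintro (_ | t) ht
    · refine hz0 ▸ ⟨h0P, fun v _ => ?_⟩
      simpa using mul_nonneg hK.le (sq_nonneg ‖v‖)
    · exact hz (t + 1) (by omega) ht
  have hround : ∀ t ∈ Icc 1 T, c t (x t) ≤ c t (z (t - 1))
      + ⟪gradient (c t) (z (t - 1)), z t - z (t - 1)⟫ + K * ‖z t - z (t - 1)‖ ^ 2
      + ‖gradient (c t) (z (t - 1)) - gradient (c (t - 1)) (z (t - 1))‖ ^ 2 / (4 * K) := by
    intro t ht
    obtain ⟨ht1, htT⟩ := mem_Icc.mp ht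
    exact optimistic_prox_step_le (hdiff t ht1 htT) hK hLK hPconv (hlip t ht1 htT)
      (hzmin _ (by omega)).1 (hx t ht1 htT).1 (hx t ht1 htT).2 (hzmin t htT).1
  have hleader := ftrl_be_the_leader hPconv (fun τ => gradient (c τ) (z (τ - 1))) z hzmin huP
  have hshift : ∑ t ∈ Icc 1 T,
      ‖gradient (c t) (z (t - 1)) - gradient (c (t - 1)) (z (t - 1))‖ ^ 2
      = ∑ t ∈ range T, ‖gradient (c (t + 1)) (z t) - gradient (c t) (z t)‖ ^ 2 := by
    rw [← Ico_add_one_right_eq_Icc, sum_Ico_eq_sum_range]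
    simp [add_comm]
  have hconst : ∀ S : ℝ, S / (4 * K) = η / (2 * L) * S := by
    intro S; rw [hK_def]; field_simp; ring
  have hsum := sum_le_sum hround
  rw [hz0, norm_zero] at hleader
  simp only [inner_sub_right, sum_add_distrib, sum_sub_distrib, hconst, ← mul_sum, hshift]
    at hsum hleader ⊢
  linarith

/-- Lemma 1: for any `η ∈ (0,1]`, the improved FTRL updates satisfy
`∑ c_t(x_t) ≤ min_{x∈P} [L/(2η)‖x‖² + ∑ (c_t(z_{t-1}) + ⟨∇c_t(z_{t-1}), x - z_{t-1}⟩)]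
  + (η/(2L)) ∑ ‖∇c_{t+1}(z_t) - ∇c_t(z_t)‖²`,
where the minimum is witnessed by a minimizer `u ∈ P`. -/
theorem improved_ftrl_lemma_one {d T : ℕ} (hT : 1 ≤ T)
    (P : Set (Euc d)) (hPconv : Convex ℝ P) (hPcl : IsClosed P)
    (hPball : P ⊆ Metric.closedBall 0 1) (h0P : (0 : Euc d) ∈ P)
    (c : ℕ → Euc d → ℝ) (hc0 : c 0 = fun _ => (0 : ℝ))
    (L : ℝ) (hL : 0 < L)
    (hconv : ∀ t, 1 ≤ t → t ≤ T → ConvexOn ℝ Set.univ (c t))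
    (hdiff : ∀ t, 1 ≤ t → t ≤ T → Differentiable ℝ (c t))
    (hlip : ∀ t, 1 ≤ t → t ≤ T → ∀ u ∈ P, ∀ v ∈ P,
      ‖gradient (c t) u - gradient (c t) v‖ ≤ L * ‖u - v‖)
    (η : ℝ) (hη0 : 0 < η) (hη1 : η ≤ 1)
    (x z : ℕ → Euc d) (hz0 : z 0 = 0)
    (hx : ∀ t, 1 ≤ t → t ≤ T → x t ∈ P ∧
      IsMinOn (fun u => ⟪gradient (c (t - 1)) (z (t - 1)), u⟫
        + L / (2 * η) * ‖u - z (t - 1)‖ ^ 2) P (x t))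
    (hz : ∀ t, 1 ≤ t → t ≤ T → z t ∈ P ∧
      IsMinOn (fun u => (∑ τ ∈ Finset.Icc 1 t, ⟪gradient (c τ) (z (τ - 1)), u⟫)
        + L / (2 * η) * ‖u‖ ^ 2) P (z t))
    (u : Euc d) (huP : u ∈ P)
    (humin : IsMinOn (fun v => L / (2 * η) * ‖v‖ ^ 2
      + ∑ t ∈ Finset.Icc 1 T, (c t (z (t - 1))
        + ⟪gradient (c t) (z (t - 1)), v - z (t - 1)⟫)) P u) :
    ∑ t ∈ Finset.Icc 1 T, c t (x t)
      ≤ (L / (2 * η) * ‖u‖ ^ 2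
          + ∑ t ∈ Finset.Icc 1 T, (c t (z (t - 1))
            + ⟪gradient (c t) (z (t - 1)), u - z (t - 1)⟫))
        + η / (2 * L) *
          ∑ t ∈ Finset.range T, ‖gradient (c (t + 1)) (z t) - gradient (c t) (z t)‖ ^ 2 :=
  improved_ftrl_lemma_one_general P hPconv h0P c L hL hdiff hlip η hη0 hη1 x z hz0 hx hz u huP
end

section
/- (Theorem 2) Suppose EVAR > 0 and the step size is η = (1/2)·min{1, L/√EVAR}, where EVAR = ∑_{t=0}^{T−1} ‖∇c_{t+1}(z_t) − ∇c_t(z_t)‖₂² is the extended sequential variation of the run. Then the prox method satisfies ∑_{t=1}^T c_t(x_t) − min_{x∈𝒫} ∑_{t=1}^T c_t(x) ≤ 2·max(L, √EVAR). -/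
/-!
Each round of the prox method is bounded by the first-order convexity inequality together with
the three-point inequality satisfied by a minimizer of a linear function plus a squared distance.
Summed over the rounds, the distances `‖x* - z_t‖²` telescope to at most `‖x*‖² ≤ 1`, and the
cross term is absorbed by Young's inequality and the `L`-Lipschitz gradients, leaving
`(η / L) · EVAR + L / (2η)`. The choice `η = min {1, L / √EVAR} / 2` balances the two terms.
-/

open Finset
open scoped RealInnerProductSpace

theorem ConvexOn.add_fderiv_sub_le {E : Type*} [NormedAddCommGroup E] [NormedSpace ℝ E]
    {f : E → ℝ} {f' : StrongDual ℝ E} {x : E} (hf : ConvexOn ℝ Set.univ f)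
    (hx : HasFDerivAt f f' x) (y : E) : f x + f' (y - x) ≤ f y := by
  set γ : ℝ →ᵃ[ℝ] E := AffineMap.lineMap x y
  have hline : ConvexOn ℝ Set.univ (f ∘ γ) := by
    simpa using hf.comp_affineMap γ
  have hderiv : HasDerivAt (f ∘ γ) (f' (y - x)) 0 := by
    refine HasFDerivAt.comp_hasDerivAt (f := γ) (0 : ℝ) ?_ AffineMap.hasDerivAt_lineMap
    simpa [γ] using hx
  have hslope := hline.le_slope_of_hasDerivAt (Set.mem_univ 0) (Set.mem_univ 1) one_pos hderiv
  simp only [slope_def_field, Function.comp_apply, γ, AffineMap.lineMap_apply_zero,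
    AffineMap.lineMap_apply_one, sub_zero, div_one] at hslope
  linarith

theorem mul_le_div_mul_sq_add_div_mul_sq {a b p q : ℝ} (hp : 0 < p) (hq : 0 < q) :
    a * b ≤ p / (2 * q) * a ^ 2 + q / (2 * p) * b ^ 2 := by
  have hsq : p / (2 * q) * a ^ 2 + q / (2 * p) * b ^ 2 - a * b
      = (p * a - q * b) ^ 2 / (2 * p * q) := by
    field_simp
    ring
  rw [← sub_nonneg, hsq]
  positivity

theorem sum_range_le_add_of_le_add_sub {a b D : ℕ → ℝ} {β : ℝ} {T : ℕ} (hβ : 0 ≤ β)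
    (hD : 0 ≤ D T) (h : ∀ i ∈ range T, a i ≤ b i + β * (D i - D (i + 1))) :
    ∑ i ∈ range T, a i ≤ ∑ i ∈ range T, b i + β * D 0 := by
  calc ∑ i ∈ range T, a i ≤ ∑ i ∈ range T, (b i + β * (D i - D (i + 1))) := sum_le_sum h
    _ = ∑ i ∈ range T, b i + β * (D 0 - D T) := by
      rw [sum_add_distrib, ← mul_sum, sum_range_sub']
    _ ≤ ∑ i ∈ range T, b i + β * D 0 := by linarith [mul_nonneg hβ hD]

section Prox

variable {F : Type*} [NormedAddCommGroup F] [InnerProductSpace ℝ F]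

theorem ConvexOn.add_inner_gradient_sub_le [CompleteSpace F] {f : F → ℝ} {x : F}
    (hf : ConvexOn ℝ Set.univ f) (hx : DifferentiableAt ℝ f x) (y : F) :
    f x + ⟪gradient f x, y - x⟫ ≤ f y := by
  simpa using hf.add_fderiv_sub_le hx.hasGradientAt.hasFDerivAt y

theorem isMinOn_prox_three_point {P : Set F} (hP : Convex ℝ P) {β : ℝ} {g z w u : F}
    (hw : w ∈ P) (hmin : IsMinOn (fun v => ⟪g, v⟫ + β * ‖v - z‖ ^ 2) P w) (hu : u ∈ P) :
    ⟪g, w⟫ + β * ‖w - z‖ ^ 2 + β * ‖u - w‖ ^ 2 ≤ ⟪g, u⟫ + β * ‖u - z‖ ^ 2 := by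
  have hderiv : HasFDerivAt (fun v => ⟪g, v⟫ + β * ‖v - z‖ ^ 2)
      (innerSL ℝ g + β • (2 • (innerSL ℝ (w - z)).comp (ContinuousLinearMap.id ℝ F))) w :=
    (innerSL ℝ g).hasFDerivAt.add ((((hasFDerivAt_id w).sub_const z).norm_sq).const_mul β)
  have hvar : 0 ≤ ⟪g, u - w⟫ + β * (2 * ⟪w - z, u - w⟫) := by
    simpa [inner_sub_left] using hmin.localize.hasFDerivWithinAt_nonneg hderiv.hasFDerivWithinAt
      (sub_mem_posTangentConeAt_of_segment_subset (hP.segment_subset hw hu))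
  have hsplit : ‖u - z‖ ^ 2 = ‖u - w‖ ^ 2 + 2 * ⟪w - z, u - w⟫ + ‖w - z‖ ^ 2 := by
    rw [real_inner_comm, ← norm_add_sq_real, sub_add_sub_cancel]
  rw [inner_sub_right] at hvar
  rw [hsplit]
  linarith

theorem prox_step_regret_le [CompleteSpace F] {P : Set F} (hP : Convex ℝ P) {L η : ℝ}
    (hL : 0 < L) (hη : 0 < η) (hη_sq : 2 * η ^ 2 ≤ 1) {f : F → ℝ} (hf : ConvexOn ℝ Set.univ f)
    {z x z' u h : F} (hfx : DifferentiableAt ℝ f x)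
    (hlip : ‖gradient f x - gradient f z‖ ≤ L * ‖x - z‖)
    (hx : x ∈ P) (hxmin : IsMinOn (fun v => ⟪h, v⟫ + L / (2 * η) * ‖v - z‖ ^ 2) P x)
    (hz' : z' ∈ P)
    (hz'min : IsMinOn (fun v => ⟪gradient f x, v⟫ + L / (2 * η) * ‖v - z‖ ^ 2) P z')
    (hu : u ∈ P) :
    f x - f u ≤ η / L * ‖gradient f z - h‖ ^ 2 + L / (2 * η) * (‖u - z‖ ^ 2 - ‖u - z'‖ ^ 2) := by
  set g := gradient f x
  set β := L / (2 * η)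
  have hlin : f x + ⟪g, u - x⟫ ≤ f u := hf.add_inner_gradient_sub_le hfx u
  have hx3 := isMinOn_prox_three_point hP hx hxmin hz'
  have hz3 := isMinOn_prox_three_point hP hz' hz'min hu
  have hcross : ⟪g - h, x - z'⟫ ≤ η / (2 * L) * ‖g - h‖ ^ 2 + β * ‖x - z'‖ ^ 2 :=
    (real_inner_le_norm _ _).trans (mul_le_div_mul_sq_add_div_mul_sq hη hL)
  have hgrad : η / (2 * L) * ‖g - h‖ ^ 2 ≤ β * ‖x - z‖ ^ 2 + η / L * ‖gradient f z - h‖ ^ 2 := by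
    have htri : ‖g - h‖ ≤ L * ‖x - z‖ + ‖gradient f z - h‖ :=
      (norm_sub_le_norm_sub_add_norm_sub g (gradient f z) h).trans (by linarith)
    have hsq : ‖g - h‖ ^ 2 ≤ 2 * ((L * ‖x - z‖) ^ 2 + ‖gradient f z - h‖ ^ 2) :=
      (pow_le_pow_left₀ (norm_nonneg _) htri 2).trans add_sq_le
    have hLη : L * η ≤ β := by
      rw [le_div_iff₀ (by positivity)]
      nlinarith
    calc η / (2 * L) * ‖g - h‖ ^ 2
        ≤ η / (2 * L) * (2 * ((L * ‖x - z‖) ^ 2 + ‖gradient f z - h‖ ^ 2)) := by gcongr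
      _ = L * η * ‖x - z‖ ^ 2 + η / L * ‖gradient f z - h‖ ^ 2 := by field_simp
      _ ≤ β * ‖x - z‖ ^ 2 + η / L * ‖gradient f z - h‖ ^ 2 := by gcongr
  -- `⟪g, x - u⟫ = ⟪g - h, x - z'⟫ + ⟪h, x - z'⟫ + ⟪g, z' - u⟫`: the last two terms are
  -- controlled by the three-point inequalities of the two prox steps.
  rw [inner_sub_right] at hlin
  rw [inner_sub_left, inner_sub_right, inner_sub_right] at hcross
  rw [norm_sub_rev z' x] at hx3
  linarith

theorem prox_regret_le [CompleteSpace F] {P : Set F} (hP : Convex ℝ P) {L η : ℝ}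
    (hL : 0 < L) (hη : 0 < η) (hη_sq : 2 * η ^ 2 ≤ 1) {T : ℕ} {c : ℕ → F → ℝ}
    (hconv : ∀ t, 1 ≤ t → t ≤ T → ConvexOn ℝ Set.univ (c t))
    (hdiff : ∀ t, 1 ≤ t → t ≤ T → Differentiable ℝ (c t))
    (hlip : ∀ t, 1 ≤ t → t ≤ T → ∀ u ∈ P, ∀ v ∈ P,
      ‖gradient (c t) u - gradient (c t) v‖ ≤ L * ‖u - v‖)
    {x z : ℕ → F} (hz0 : z 0 ∈ P)
    (hx : ∀ t, 1 ≤ t → t ≤ T → x t ∈ P ∧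
      IsMinOn (fun u => ⟪gradient (c (t - 1)) (z (t - 1)), u⟫
        + L / (2 * η) * ‖u - z (t - 1)‖ ^ 2) P (x t))
    (hz : ∀ t, 1 ≤ t → t ≤ T → z t ∈ P ∧
      IsMinOn (fun u => ⟪gradient (c t) (x t), u⟫
        + L / (2 * η) * ‖u - z (t - 1)‖ ^ 2) P (z t))
    {u : F} (hu : u ∈ P) :
    ∑ t ∈ Icc 1 T, c t (x t) - ∑ t ∈ Icc 1 T, c t u
      ≤ η / L * ∑ t ∈ range T, ‖gradient (c (t + 1)) (z t) - gradient (c t) (z t)‖ ^ 2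
        + L / (2 * η) * ‖u - z 0‖ ^ 2 := by
  have hzP : ∀ i ≤ T, z i ∈ P := by
    rintro (_ | i) hi
    · exact hz0
    · exact (hz _ (Nat.le_add_left 1 i) hi).1
  have hstep : ∀ i ∈ range T, c (i + 1) (x (i + 1)) - c (i + 1) u
      ≤ η / L * ‖gradient (c (i + 1)) (z i) - gradient (c i) (z i)‖ ^ 2
        + L / (2 * η) * (‖u - z i‖ ^ 2 - ‖u - z (i + 1)‖ ^ 2) := by
    intro i hi
    have hiT : i + 1 ≤ T := mem_range.1 hi
    have hi1 : 1 ≤ i + 1 := Nat.le_add_left 1 i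
    obtain ⟨hxP, hxmin⟩ := hx (i + 1) hi1 hiT
    obtain ⟨hzP', hzmin⟩ := hz (i + 1) hi1 hiT
    exact prox_step_regret_le hP hL hη hη_sq (hconv _ hi1 hiT) (hdiff _ hi1 hiT _)
      (hlip _ hi1 hiT _ hxP _ (hzP i (Nat.le_of_succ_le hiT))) hxP hxmin hzP' hzmin hu
  have hreindex : ∑ t ∈ Icc 1 T, (c t (x t) - c t u)
      = ∑ i ∈ range T, (c (i + 1) (x (i + 1)) - c (i + 1) u) := by
    rw [range_eq_Ico, sum_Ico_add' fun t => c t (x t) - c t u, ← Ico_add_one_right_eq_Icc,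
      zero_add]
  rw [← sum_sub_distrib, hreindex, mul_sum]
  exact sum_range_le_add_of_le_add_sub (by positivity) (by positivity) hstep

end Prox

theorem tuned_step_bound_le_two_mul_max {L s η : ℝ} (hL : 0 < L) (hs : 0 < s)
    (hη : η = 1 / 2 * min 1 (L / s)) : η / L * s ^ 2 + L / (2 * η) ≤ 2 * max L s := by
  rcases le_total s L with hsL | hLs
  · have hη' : η = 1 / 2 := by
      rw [hη, min_eq_left ((one_le_div hs).2 hsL), mul_one]
    have hsq : s ^ 2 / (2 * L) ≤ L / 2 := by
      rw [div_le_div_iff₀ (by positivity) two_pos]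
      nlinarith
    calc η / L * s ^ 2 + L / (2 * η) = s ^ 2 / (2 * L) + L := by rw [hη']; field_simp
      _ ≤ 2 * max L s := by linarith [le_max_left L s]
  · have hη' : η = L / (2 * s) := by
      rw [hη, min_eq_right ((div_le_one hs).2 hLs)]
      ring
    calc η / L * s ^ 2 + L / (2 * η) = 3 / 2 * s := by rw [hη']; field_simp; ring
      _ ≤ 2 * max L s := by linarith [le_max_right L s]

theorem prox_theorem_two_general {d T : ℕ}
    (P : Set (Euc d)) (hPconv : Convex ℝ P)
    (hPball : P ⊆ Metric.closedBall 0 1) (h0P : (0 : Euc d) ∈ P)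
    (c : ℕ → Euc d → ℝ)
    (L : ℝ) (hL : 0 < L)
    (hconv : ∀ t, 1 ≤ t → t ≤ T → ConvexOn ℝ Set.univ (c t))
    (hdiff : ∀ t, 1 ≤ t → t ≤ T → Differentiable ℝ (c t))
    (hlip : ∀ t, 1 ≤ t → t ≤ T → ∀ u ∈ P, ∀ v ∈ P,
      ‖gradient (c t) u - gradient (c t) v‖ ≤ L * ‖u - v‖)
    (x z : ℕ → Euc d) (hz0 : z 0 = 0)
    (V : ℝ)
    (hV : V = ∑ t ∈ Finset.range T, ‖gradient (c (t + 1)) (z t) - gradient (c t) (z t)‖ ^ 2)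
    (hVpos : 0 < V)
    (η : ℝ) (hηdef : η = 1 / 2 * min 1 (L / Real.sqrt V))
    (hx : ∀ t, 1 ≤ t → t ≤ T → x t ∈ P ∧
      IsMinOn (fun u => ⟪gradient (c (t - 1)) (z (t - 1)), u⟫
        + L / (2 * η) * ‖u - z (t - 1)‖ ^ 2) P (x t))
    (hz : ∀ t, 1 ≤ t → t ≤ T → z t ∈ P ∧
      IsMinOn (fun u => ⟪gradient (c t) (x t), u⟫
        + L / (2 * η) * ‖u - z (t - 1)‖ ^ 2) P (z t))
    (xstar : Euc d) (hxstar : xstar ∈ P) :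
    (∑ t ∈ Finset.Icc 1 T, c t (x t)) - (∑ t ∈ Finset.Icc 1 T, c t xstar)
      ≤ 2 * max L (Real.sqrt V) := by
  have hsV : 0 < Real.sqrt V := Real.sqrt_pos.2 hVpos
  have hη : 0 < η := by rw [hηdef]; positivity
  have hη_sq : 2 * η ^ 2 ≤ 1 := by
    rw [hηdef]
    nlinarith [min_le_left 1 (L / Real.sqrt V)]
  have hstart : ‖xstar - z 0‖ ^ 2 ≤ 1 := by
    rw [hz0, sub_zero]
    exact pow_le_one₀ (norm_nonneg _) (by simpa using hPball hxstar)
  calc (∑ t ∈ Icc 1 T, c t (x t)) - (∑ t ∈ Icc 1 T, c t xstar)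
      ≤ η / L * V + L / (2 * η) * ‖xstar - z 0‖ ^ 2 := by
        rw [hV]
        exact prox_regret_le hPconv hL hη hη_sq hconv hdiff hlip (hz0 ▸ h0P) hx hz hxstar
    _ ≤ η / L * Real.sqrt V ^ 2 + L / (2 * η) := by
        rw [Real.sq_sqrt hVpos.le]
        gcongr
        exact mul_le_of_le_one_right (by positivity) hstart
    _ ≤ 2 * max L (Real.sqrt V) := tuned_step_bound_le_two_mul_max hL hsV hηdef

/-- Theorem 2: regret bound of the prox method with the tuned step size
`η = (1/2)·min{1, L/√EVAR}`, where `EVAR` is the extended sequential variation of the run. -/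
theorem prox_theorem_two {d T : ℕ} (hT : 1 ≤ T)
    (P : Set (Euc d)) (hPconv : Convex ℝ P) (hPcl : IsClosed P)
    (hPball : P ⊆ Metric.closedBall 0 1) (h0P : (0 : Euc d) ∈ P)
    (c : ℕ → Euc d → ℝ) (hc0 : c 0 = fun _ => (0 : ℝ))
    (L : ℝ) (hL : 0 < L)
    (hconv : ∀ t, 1 ≤ t → t ≤ T → ConvexOn ℝ Set.univ (c t))
    (hdiff : ∀ t, 1 ≤ t → t ≤ T → Differentiable ℝ (c t))
    (hlip : ∀ t, 1 ≤ t → t ≤ T → ∀ u ∈ P, ∀ v ∈ P,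
      ‖gradient (c t) u - gradient (c t) v‖ ≤ L * ‖u - v‖)
    (x z : ℕ → Euc d) (hz0 : z 0 = 0)
    (V : ℝ)
    (hV : V = ∑ t ∈ Finset.range T, ‖gradient (c (t + 1)) (z t) - gradient (c t) (z t)‖ ^ 2)
    (hVpos : 0 < V)
    (η : ℝ) (hηdef : η = 1 / 2 * min 1 (L / Real.sqrt V))
    (hx : ∀ t, 1 ≤ t → t ≤ T → x t ∈ P ∧
      IsMinOn (fun u => ⟪gradient (c (t - 1)) (z (t - 1)), u⟫
        + L / (2 * η) * ‖u - z (t - 1)‖ ^ 2) P (x t))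
    (hz : ∀ t, 1 ≤ t → t ≤ T → z t ∈ P ∧
      IsMinOn (fun u => ⟪gradient (c t) (x t), u⟫
        + L / (2 * η) * ‖u - z (t - 1)‖ ^ 2) P (z t))
    (xstar : Euc d) (hxstar : xstar ∈ P)
    (hmin : IsMinOn (fun u => ∑ t ∈ Finset.Icc 1 T, c t u) P xstar) :
    (∑ t ∈ Finset.Icc 1 T, c t (x t)) - (∑ t ∈ Finset.Icc 1 T, c t xstar)
      ≤ 2 * max L (Real.sqrt V) :=
  prox_theorem_two_general P hPconv hPball h0P c L hL hconv hdiff hlip x z hz0 V hV hVpos η hηdef hx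
    hz xstar hxstar
end

section
/- (Lemma 3.1 of Nemirovski, as used in the paper; Euclidean case) Let U ⊆ ℝ^d be a nonempty closed convex set, z ∈ ℝ^d, γ > 0, and ξ, ζ ∈ ℝ^d. Let x be a minimizer over u ∈ U of γ⟨ξ, u⟩ + (1/2)‖u − z‖₂² and let z₊ be a minimizer over u ∈ U of γ⟨ζ, u⟩ + (1/2)‖u − z‖₂². Then for every u ∈ U: γ⟨ζ, x − u⟩ ≤ (1/2)‖u − z‖₂² − (1/2)‖u − z₊‖₂² + γ²‖ξ − ζ‖₂² − (1/2)(‖x − z‖₂² + ‖x − z₊‖₂²). -/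
open scoped RealInnerProductSpace

/-!
The minimizer `x` of `γ⟪ξ, u⟫ + ½‖u - z‖²` over a convex set satisfies the first-order condition
`⟪γ • ξ + (x - z), u - x⟫ ≥ 0`, which the three-point identity turns into
`2γ⟪ξ, x - u⟫ ≤ ‖u - z‖² - ‖u - x‖² - ‖x - z‖²`. Adding this inequality for `x` (tested at `z₊`)
and for `z₊` (tested at `u`) gives the claim up to the cross term `γ⟪ζ - ξ, x - z₊⟫`; adding it for
`x` and `z₊` tested at each other shows `‖x - z₊‖ ≤ γ‖ξ - ζ‖`, so by Cauchy–Schwarz the cross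
term is at most `γ²‖ξ - ζ‖²`.
-/

/-- Its minimizer over a convex set is the projection of `z - γ • ξ` onto that set. -/
noncomputable def proxObjective {E : Type*} [NormedAddCommGroup E] [InnerProductSpace ℝ E]
    (γ : ℝ) (ξ z : E) (u : E) : ℝ :=
  γ * ⟪ξ, u⟫ + 1 / 2 * ‖u - z‖ ^ 2

section

variable {E : Type*} [NormedAddCommGroup E] [InnerProductSpace ℝ E]

theorem two_mul_inner_sub_sub_eq (a u z : E) :
    2 * ⟪a - z, u - a⟫ = ‖u - z‖ ^ 2 - ‖u - a‖ ^ 2 - ‖a - z‖ ^ 2 := by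
  rw [show u - z = (u - a) + (a - z) by abel, norm_add_sq_real, real_inner_comm]
  ring

theorem hasFDerivAt_proxObjective (γ : ℝ) (ξ z x : E) :
    HasFDerivAt (proxObjective γ ξ z) (innerSL ℝ (γ • ξ + (x - z))) x := by
  have h := (((innerSL ℝ ξ).hasFDerivAt (x := x)).const_mul γ).add
    (((hasFDerivAt_id x).sub_const z).norm_sq.const_mul (1 / 2))
  refine h.congr_fderiv ?_
  ext v
  simp

variable {s : Set E} {γ : ℝ} {ξ ζ z x y u : E}

theorem IsMinOn.inner_sub_nonneg_of_proxObjective (hs : Convex ℝ s) (hx : x ∈ s)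
    (hmin : IsMinOn (proxObjective γ ξ z) s x) (hu : u ∈ s) :
    0 ≤ ⟪γ • ξ + (x - z), u - x⟫ :=
  hmin.localize.hasFDerivWithinAt_nonneg (hasFDerivAt_proxObjective γ ξ z x).hasFDerivWithinAt
    (sub_mem_posTangentConeAt_of_segment_subset (hs.segment_subset hx hu))

theorem IsMinOn.two_mul_inner_sub_le_of_proxObjective (hs : Convex ℝ s) (hx : x ∈ s)
    (hmin : IsMinOn (proxObjective γ ξ z) s x) (hu : u ∈ s) :
    2 * γ * ⟪ξ, x - u⟫ ≤ ‖u - z‖ ^ 2 - ‖u - x‖ ^ 2 - ‖x - z‖ ^ 2 := by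
  have h := hmin.inner_sub_nonneg_of_proxObjective hs hx hu
  rw [inner_add_left, real_inner_smul_left] at h
  rw [← two_mul_inner_sub_sub_eq, ← neg_sub u x, inner_neg_right]
  linarith

theorem IsMinOn.norm_sub_le_of_proxObjective (hγ : 0 ≤ γ) (hs : Convex ℝ s)
    (hx : x ∈ s) (hy : y ∈ s) (hxmin : IsMinOn (proxObjective γ ξ z) s x)
    (hymin : IsMinOn (proxObjective γ ζ z) s y) :
    ‖x - y‖ ≤ γ * ‖ξ - ζ‖ := by
  have hxy := hxmin.two_mul_inner_sub_le_of_proxObjective hs hx hy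
  have hyx := hymin.two_mul_inner_sub_le_of_proxObjective hs hy hx
  have hsq : ‖x - y‖ ^ 2 ≤ γ * ⟪ξ - ζ, y - x⟫ := by
    rw [norm_sub_rev y x] at hxy
    simp only [inner_sub_left, inner_sub_right] at hxy hyx ⊢
    linarith
  have hcs : γ * ⟪ξ - ζ, y - x⟫ ≤ γ * ‖ξ - ζ‖ * ‖x - y‖ := by
    rw [mul_assoc, norm_sub_rev x y]
    exact mul_le_mul_of_nonneg_left (real_inner_le_norm _ _) hγ
  rcases (norm_nonneg (x - y)).eq_or_lt with h0 | h0
  · rw [← h0]; positivity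
  · nlinarith

end

theorem nemirovski_lemma_euclidean_general {d : ℕ}
    (U : Set (Euc d)) (hUconv : Convex ℝ U)
    (z ξ ζ : Euc d) (γ : ℝ) (hγ : 0 < γ)
    (x zp : Euc d) (hxU : x ∈ U) (hzpU : zp ∈ U)
    (hxmin : IsMinOn (fun u => γ * ⟪ξ, u⟫ + 1 / 2 * ‖u - z‖ ^ 2) U x)
    (hzpmin : IsMinOn (fun u => γ * ⟪ζ, u⟫ + 1 / 2 * ‖u - z‖ ^ 2) U zp) :
    ∀ u ∈ U, γ * ⟪ζ, x - u⟫
      ≤ 1 / 2 * ‖u - z‖ ^ 2 - 1 / 2 * ‖u - zp‖ ^ 2 + γ ^ 2 * ‖ξ - ζ‖ ^ 2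
        - 1 / 2 * (‖x - z‖ ^ 2 + ‖x - zp‖ ^ 2) := by
  intro u hu
  have hx := hxmin.two_mul_inner_sub_le_of_proxObjective hUconv hxU hzpU
  have hzp := hzpmin.two_mul_inner_sub_le_of_proxObjective hUconv hzpU hu
  have hcross : γ * ⟪ζ - ξ, x - zp⟫ ≤ γ ^ 2 * ‖ξ - ζ‖ ^ 2 :=
    calc γ * ⟪ζ - ξ, x - zp⟫ ≤ γ * (‖ξ - ζ‖ * ‖x - zp‖) := by
          rw [norm_sub_rev ξ ζ]
          exact mul_le_mul_of_nonneg_left (real_inner_le_norm _ _) hγ.le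
      _ ≤ γ * (‖ξ - ζ‖ * (γ * ‖ξ - ζ‖)) := by
          gcongr
          exact hxmin.norm_sub_le_of_proxObjective hγ.le hUconv hxU hzpU hzpmin
      _ = γ ^ 2 * ‖ξ - ζ‖ ^ 2 := by ring
  rw [norm_sub_rev zp x] at hx
  simp only [inner_sub_left, inner_sub_right] at hx hzp hcross ⊢
  linarith

/-- Lemma 3.1 of Nemirovski, Euclidean case. -/
theorem nemirovski_lemma_euclidean {d : ℕ}
    (U : Set (Euc d)) (hUne : U.Nonempty) (hUcl : IsClosed U) (hUconv : Convex ℝ U)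
    (z ξ ζ : Euc d) (γ : ℝ) (hγ : 0 < γ)
    (x zp : Euc d) (hxU : x ∈ U) (hzpU : zp ∈ U)
    (hxmin : IsMinOn (fun u => γ * ⟪ξ, u⟫ + 1 / 2 * ‖u - z‖ ^ 2) U x)
    (hzpmin : IsMinOn (fun u => γ * ⟪ζ, u⟫ + 1 / 2 * ‖u - z‖ ^ 2) U zp) :
    ∀ u ∈ U, γ * ⟪ζ, x - u⟫
      ≤ 1 / 2 * ‖u - z‖ ^ 2 - 1 / 2 * ‖u - zp‖ ^ 2 + γ ^ 2 * ‖ξ - ζ‖ ^ 2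
        - 1 / 2 * (‖x - z‖ ^ 2 + ‖x - zp‖ ^ 2) :=
  nemirovski_lemma_euclidean_general U hUconv z ξ ζ γ hγ x zp hxU hzpU hxmin hzpmin
end

section
/- (Lemma 2 / Lemma 3.1 of Nemirovski, general norm) Let N be a norm on ℝ^d with dual norm N*(v) = sup{⟨v, x⟩ : N(x) ≤ 1}, let ω : ℝ^d → ℝ be differentiable and α-strongly convex with respect to N (i.e. ω(u) ≥ ω(v) + ⟨∇ω(v), u − v⟩ + (α/2)N(u − v)² for all u, v), and let D(x, z) = ω(x) − ω(z) − ⟨∇ω(z), x − z⟩ be the induced Bregman distance. Let U ⊆ ℝ^d be a nonempty closed convex set, z ∈ ℝ^d, γ > 0, ξ, ζ ∈ ℝ^d. If x minimizes u ↦ γ⟨ξ, u⟩ + D(u, z) over U and z₊ minimizes u ↦ γ⟨ζ, u⟩ + D(u, z) over U, then for every u ∈ U: γ⟨ζ, x − u⟩ ≤ D(u, z) − D(u, z₊) + (γ²/α)·N*(ξ − ζ)² − (α/2)(N(x − z)² + N(x − z₊)²). -/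
open scoped RealInnerProductSpace

/-!
First-order optimality of a prox point `x` of `u ↦ γ⟪ξ, u⟫ + D(u, z)` on the convex set `U`,
combined with the three-point identity of the Bregman distance, gives
`γ⟪ξ, x - u⟫ ≤ D(u, z) - D(u, x) - D(x, z)` for `u ∈ U`. Applying this to `z₊` against `u` and
to `x` against `z₊` proves the claim up to the error term `γ⟪ξ - ζ, z₊ - x⟫`. Applying it
crosswise to `x` and `z₊` and using strong convexity gives the stability estimate
`α N(x - z₊)² ≤ γ⟪ξ - ζ, z₊ - x⟫ ≤ γ N*(ξ - ζ) N(x - z₊)`, so `α N(x - z₊) ≤ γ N*(ξ - ζ)` and the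
error term is at most `(γ²/α) N*(ξ - ζ)²`. The supremum defining `N*` is finite because, by
compactness of the Euclidean sphere, `N` dominates a multiple of the Euclidean norm.
-/

variable {E : Type*} [NormedAddCommGroup E] [InnerProductSpace ℝ E]

noncomputable def dualNorm (N : E → ℝ) (v : E) : ℝ :=
  sSup ((fun a => ⟪v, a⟫) '' {a | N a ≤ 1})

namespace Seminorm

variable [FiniteDimensional ℝ E] (p : Seminorm ℝ E)

theorem continuous_of_finiteDimensional : Continuous p :=
  p.convexOn.locallyLipschitz.continuous

theorem exists_pos_mul_norm_le (hp : ∀ a, p a = 0 → a = 0) :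
    ∃ c > 0, ∀ a, c * ‖a‖ ≤ p a := by
  rcases subsingleton_or_nontrivial E with hE | hE
  · exact ⟨1, one_pos, fun a => by simp [Subsingleton.elim a 0]⟩
  obtain ⟨y, hy, hymin⟩ := (isCompact_sphere (0 : E) 1).exists_isMinOn
    (NormedSpace.sphere_nonempty.mpr zero_le_one) p.continuous_of_finiteDimensional.continuousOn
  have hy0 : y ≠ 0 := ne_zero_of_mem_unit_sphere ⟨y, hy⟩
  refine ⟨p y, (apply_nonneg p y).lt_of_ne fun h => hy0 (hp y h.symm), fun a => ?_⟩
  rcases eq_or_ne a 0 with rfl | ha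
  · simp
  have hnorm : ‖a‖⁻¹ • a ∈ Metric.sphere (0 : E) 1 := by
    simp [norm_smul, ha]
  calc p y * ‖a‖ ≤ p (‖a‖⁻¹ • a) * ‖a‖ := by gcongr; exact hymin hnorm
    _ = p a := by
      rw [map_smul_eq_mul, norm_inv, norm_norm, mul_comm, ← mul_assoc,
        mul_inv_cancel₀ (norm_ne_zero_iff.2 ha), one_mul]

theorem bddAbove_inner_image (hp : ∀ a, p a = 0 → a = 0) (v : E) :
    BddAbove ((fun a => ⟪v, a⟫) '' {a | p a ≤ 1}) := by
  obtain ⟨c, hc, hle⟩ := p.exists_pos_mul_norm_le hp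
  refine ⟨‖v‖ * c⁻¹, ?_⟩
  rintro _ ⟨a, ha, rfl⟩
  have ha' : ‖a‖ ≤ c⁻¹ := by
    rw [← one_div, le_div_iff₀' hc]; exact (hle a).trans ha
  exact (real_inner_le_norm v a).trans (by gcongr)

theorem inner_le_dualNorm_mul (hp : ∀ a, p a = 0 → a = 0) (v a : E) :
    ⟪v, a⟫ ≤ dualNorm p v * p a := by
  rcases eq_or_ne (p a) 0 with h0 | h0
  · simp [hp a h0]
  have hpos : 0 < p a := (apply_nonneg p a).lt_of_ne' h0
  have hmem : ⟪v, (p a)⁻¹ • a⟫ ∈ (fun a => ⟪v, a⟫) '' {a | p a ≤ 1} :=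
    ⟨_, by simp [map_smul_eq_mul, abs_of_pos hpos, h0], rfl⟩
  have hle := le_csSup (p.bddAbove_inner_image hp v) hmem
  rw [real_inner_smul_right, inv_mul_le_iff₀ hpos, mul_comm] at hle
  exact hle

end Seminorm

theorem IsMinOn.hasFDerivAt_nonneg_of_convex {F : Type*} [NormedAddCommGroup F]
    [NormedSpace ℝ F] {f : F → ℝ} {f' : F →L[ℝ] ℝ} {s : Set F} {a u : F}
    (hmin : IsMinOn f s a) (hf : HasFDerivAt f f' a) (hs : Convex ℝ s) (ha : a ∈ s)
    (hu : u ∈ s) : 0 ≤ f' (u - a) :=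
  hmin.localize.hasFDerivWithinAt_nonneg hf.hasFDerivWithinAt
    (sub_mem_posTangentConeAt_of_segment_subset (hs.segment_subset ha hu))

section Bregman

variable [CompleteSpace E]

noncomputable def bregman (ω : E → ℝ) (a b : E) : ℝ :=
  ω a - (ω b + ⟪gradient ω b, a - b⟫)

theorem bregman_sub_bregman_sub_bregman (ω : E → ℝ) (u z p : E) :
    bregman ω u z - bregman ω u p - bregman ω p z = ⟪gradient ω p - gradient ω z, u - p⟫ := by
  simp only [bregman, inner_sub_left, inner_sub_right]
  ring

theorem hasGradientAt_bregman_left {ω : E → ℝ} {p : E} (hω : DifferentiableAt ℝ ω p) (z : E) :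
    HasGradientAt (fun u => bregman ω u z) (gradient ω p - gradient ω z) p := by
  rw [hasGradientAt_iff_hasFDerivAt, map_sub]
  have hlin : HasFDerivAt (fun u => ω z + ⟪gradient ω z, u - z⟫)
      (InnerProductSpace.toDual ℝ E (gradient ω z)) p :=
    (((innerSL ℝ (gradient ω z)).hasFDerivAt).comp p ((hasFDerivAt_id p).sub_const z)).const_add _
  exact hω.hasGradientAt.hasFDerivAt.sub hlin

theorem half_mul_sq_le_bregman {ω : E → ℝ} (p : Seminorm ℝ E) {α : ℝ}
    (hsc : ∀ u v, ω v + ⟪gradient ω v, u - v⟫ + α / 2 * p (u - v) ^ 2 ≤ ω u) (a b : E) :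
    α / 2 * p (a - b) ^ 2 ≤ bregman ω a b := by
  have := hsc a b
  rw [bregman]
  linarith

def IsProxPoint (ω : E → ℝ) (U : Set E) (z : E) (γ : ℝ) (ξ x : E) : Prop :=
  x ∈ U ∧ IsMinOn (fun u => γ * ⟪ξ, u⟫ + bregman ω u z) U x

namespace IsProxPoint

variable {ω : E → ℝ} {U : Set E} {z : E} {γ : ℝ}

theorem three_point_le {ξ x u : E} (hx : IsProxPoint ω U z γ ξ x) (hω : DifferentiableAt ℝ ω x)
    (hU : Convex ℝ U) (hu : u ∈ U) :
    γ * ⟪ξ, x - u⟫ ≤ bregman ω u z - bregman ω u x - bregman ω x z := by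
  have hderiv : HasFDerivAt (fun u => γ * ⟪ξ, u⟫ + bregman ω u z)
      (γ • innerSL ℝ ξ + InnerProductSpace.toDual ℝ E (gradient ω x - gradient ω z)) x :=
    ((innerSL ℝ ξ).hasFDerivAt.const_mul γ).add (hasGradientAt_bregman_left hω z).hasFDerivAt
  have hfirst := hx.2.hasFDerivAt_nonneg_of_convex hderiv hU hx.1 hu
  simp only [add_apply, smul_apply, innerSL_apply_apply,
    InnerProductSpace.toDual_apply_apply, smul_eq_mul] at hfirst
  rw [bregman_sub_bregman_sub_bregman, ← neg_sub u x]
  simp only [inner_neg_right]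
  linarith

theorem mul_sq_le_inner {ξ ζ x y : E} (p : Seminorm ℝ E) {α : ℝ}
    (hsc : ∀ u v, ω v + ⟪gradient ω v, u - v⟫ + α / 2 * p (u - v) ^ 2 ≤ ω u)
    (hU : Convex ℝ U) (hx : IsProxPoint ω U z γ ξ x) (hωx : DifferentiableAt ℝ ω x)
    (hy : IsProxPoint ω U z γ ζ y) (hωy : DifferentiableAt ℝ ω y) :
    α * p (x - y) ^ 2 ≤ γ * ⟪ξ - ζ, y - x⟫ := by
  have hxy := hx.three_point_le hωx hU hy.1
  have hyx := hy.three_point_le hωy hU hx.1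
  have hDxy := half_mul_sq_le_bregman p hsc x y
  have hDyx := half_mul_sq_le_bregman p hsc y x
  rw [map_sub_rev] at hDyx
  have hinner : γ * ⟪ξ - ζ, y - x⟫ = -(γ * ⟪ξ, x - y⟫ + γ * ⟪ζ, y - x⟫) := by
    simp only [inner_sub_left, inner_sub_right]; ring
  linarith

end IsProxPoint

end Bregman

theorem mul_le_sq_div_of_mul_sq_le {α b t : ℝ} (hα : 0 < α)
    (h : α * t ^ 2 ≤ b * t) : b * t ≤ b ^ 2 / α := by
  rw [le_div_iff₀ hα]
  -- b² - αbt = (b - αt)² + α(bt - αt²)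
  nlinarith [sq_nonneg (b - α * t), mul_le_mul_of_nonneg_left h hα.le]

theorem nemirovski_lemma_general_general {d : ℕ}
    (N : Euc d → ℝ)
    (hNadd : ∀ a b, N (a + b) ≤ N a + N b)
    (hNsmul : ∀ (r : ℝ) (a : Euc d), N (r • a) = |r| * N a)
    (hNdef : ∀ a, N a = 0 → a = 0)
    (Ns : Euc d → ℝ)
    (hNs : ∀ v, Ns v = sSup ((fun a => ⟪v, a⟫) '' {a | N a ≤ 1}))
    (ω : Euc d → ℝ) (hωdiff : Differentiable ℝ ω)
    (α : ℝ) (hα : 0 < α)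
    (hsc : ∀ u v, ω v + ⟪gradient ω v, u - v⟫ + α / 2 * N (u - v) ^ 2 ≤ ω u)
    (D : Euc d → Euc d → ℝ)
    (hD : ∀ a b, D a b = ω a - (ω b + ⟪gradient ω b, a - b⟫))
    (U : Set (Euc d)) (hUconv : Convex ℝ U)
    (z ξ ζ : Euc d) (γ : ℝ) (hγ : 0 < γ)
    (x zp : Euc d) (hxU : x ∈ U) (hzpU : zp ∈ U)
    (hxmin : IsMinOn (fun u => γ * ⟪ξ, u⟫ + D u z) U x)
    (hzpmin : IsMinOn (fun u => γ * ⟪ζ, u⟫ + D u z) U zp) :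
    ∀ u ∈ U, γ * ⟪ζ, x - u⟫
      ≤ D u z - D u zp + γ ^ 2 / α * Ns (ξ - ζ) ^ 2
        - α / 2 * (N (x - z) ^ 2 + N (x - zp) ^ 2) := by
  intro u hu
  obtain rfl : D = bregman ω := funext₂ hD
  obtain rfl : Ns = dualNorm N := funext hNs
  let p : Seminorm ℝ (Euc d) := .of N hNadd fun r a => by rw [hNsmul, Real.norm_eq_abs]
  have hx : IsProxPoint ω U z γ ξ x := ⟨hxU, hxmin⟩
  have hzp : IsProxPoint ω U z γ ζ zp := ⟨hzpU, hzpmin⟩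
  have hzp_u := hzp.three_point_le (hωdiff zp) hUconv hu
  have hx_zp := hx.three_point_le (hωdiff x) hUconv hzpU
  have hpN : ⇑p = N := rfl
  have hstab := hx.mul_sq_le_inner p hsc hUconv (hωdiff x) hzp (hωdiff zp)
  have hDxz := half_mul_sq_le_bregman p hsc x z
  have hDzpx := half_mul_sq_le_bregman p hsc zp x
  rw [map_sub_rev] at hDzpx
  have hdual : ⟪ξ - ζ, zp - x⟫ ≤ dualNorm p (ξ - ζ) * p (x - zp) := by
    rw [← map_sub_rev p]; exact p.inner_le_dualNorm_mul hNdef (ξ - ζ) (zp - x)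
  rw [hpN] at hstab hDxz hDzpx hdual
  have hγdual := mul_le_mul_of_nonneg_left hdual hγ.le
  have hyoung := mul_le_sq_div_of_mul_sq_le (b := γ * dualNorm N (ξ - ζ)) hα
    (by rw [mul_assoc]; exact hstab.trans hγdual)
  have hsplit : γ * ⟪ζ, x - u⟫ = γ * ⟪ζ, zp - u⟫ + γ * ⟪ξ, x - zp⟫ + γ * ⟪ξ - ζ, zp - x⟫ := by
    simp only [inner_sub_left, inner_sub_right]; ring
  rw [mul_pow, mul_div_right_comm] at hyoung
  linarith

/-- Lemma 2 (Lemma 3.1 of Nemirovski), general norm version.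
`N` is a norm on `ℝ^d`, `Ns` its dual norm, `ω` a differentiable `α`-strongly convex
function w.r.t. `N`, and `D` the induced Bregman distance. -/
theorem nemirovski_lemma_general {d : ℕ}
    (N : Euc d → ℝ)
    (hNadd : ∀ a b, N (a + b) ≤ N a + N b)
    (hNsmul : ∀ (r : ℝ) (a : Euc d), N (r • a) = |r| * N a)
    (hNdef : ∀ a, N a = 0 → a = 0)
    (Ns : Euc d → ℝ)
    (hNs : ∀ v, Ns v = sSup ((fun a => ⟪v, a⟫) '' {a | N a ≤ 1}))
    (ω : Euc d → ℝ) (hωdiff : Differentiable ℝ ω)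
    (α : ℝ) (hα : 0 < α)
    (hsc : ∀ u v, ω v + ⟪gradient ω v, u - v⟫ + α / 2 * N (u - v) ^ 2 ≤ ω u)
    (D : Euc d → Euc d → ℝ)
    (hD : ∀ a b, D a b = ω a - (ω b + ⟪gradient ω b, a - b⟫))
    (U : Set (Euc d)) (hUne : U.Nonempty) (hUcl : IsClosed U) (hUconv : Convex ℝ U)
    (z ξ ζ : Euc d) (γ : ℝ) (hγ : 0 < γ)
    (x zp : Euc d) (hxU : x ∈ U) (hzpU : zp ∈ U)
    (hxmin : IsMinOn (fun u => γ * ⟪ξ, u⟫ + D u z) U x)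
    (hzpmin : IsMinOn (fun u => γ * ⟪ζ, u⟫ + D u z) U zp) :
    ∀ u ∈ U, γ * ⟪ζ, x - u⟫
      ≤ D u z - D u zp + γ ^ 2 / α * Ns (ξ - ζ) ^ 2
        - α / 2 * (N (x - z) ^ 2 + N (x - zp) ^ 2) :=
  nemirovski_lemma_general_general N hNadd hNsmul hNdef Ns hNs ω hωdiff α hα hsc D hD U hUconv z ξ ζ
    γ hγ x zp hxU hzpU hxmin hzpmin
end

section
/- Let T be an even positive integer and f, g ∈ ℝ^d. Define f_t = f for 1 ≤ t ≤ T/2 and f_t = g for T/2 < t ≤ T, and let μ = (1/T)∑_{t=1}^T f_t. Then the total variation equals ∑_{t=1}^T ‖f_t − μ‖₂² = (T/4)‖f − g‖₂², while the sequential variation equals ∑_{t=1}^{T−1} ‖f_{t+1} − f_t‖₂² = ‖f − g‖₂². (Hence the total variation cannot be bounded by a constant multiple of the sequential variation.) -/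
open Finset

/-! The mean of the two-block sequence is the midpoint of `f` and `g`, at distance `‖f - g‖ / 2`
from both, so each of the `T` terms of the total variation equals `‖f - g‖² / 4`; the sequential
variation only sees the single jump from `f` to `g`. -/

section TwoBlocks

variable {α : Type*} (x : ℕ → α) {a b : α} {m n : ℕ}

theorem sum_Icc_two_blocks {M : Type*} [AddCommMonoid M] (φ : α → M)
    (ha : ∀ t, 1 ≤ t → t ≤ m → x t = a) (hb : ∀ t, m < t → t ≤ m + n → x t = b) :
    ∑ t ∈ Icc 1 (m + n), φ (x t) = m • φ a + n • φ b := by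
  have hfirst : ∑ t ∈ Ioc 0 m, φ (x t) = ∑ _t ∈ Ioc 0 m, φ a :=
    sum_congr rfl fun t ht => by rw [mem_Ioc] at ht; rw [ha t ht.1 ht.2]
  have hsecond : ∑ t ∈ Ioc m (m + n), φ (x t) = ∑ _t ∈ Ioc m (m + n), φ b :=
    sum_congr rfl fun t ht => by rw [mem_Ioc] at ht; rw [hb t ht.1 ht.2]
  rw [show Icc 1 (m + n) = Ioc 0 (m + n) from Icc_add_one_left_eq_Ioc 0 _,
    ← sum_Ioc_consecutive _ m.zero_le (m.le_add_right n), hfirst, hsecond,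
    sum_const, sum_const, Nat.card_Ioc, Nat.card_Ioc, Nat.sub_zero, Nat.add_sub_cancel_left]

theorem sum_Icc_succ_two_blocks {M : Type*} [AddCommMonoid M] (D : α → α → M)
    (hD : ∀ v, D v v = 0) (hm : 1 ≤ m) (hn : 1 ≤ n)
    (ha : ∀ t, 1 ≤ t → t ≤ m → x t = a) (hb : ∀ t, m < t → t ≤ m + n → x t = b) :
    ∑ t ∈ Icc 1 (m + n - 1), D (x t) (x (t + 1)) = D a b := by
  rw [sum_eq_single_of_mem m (mem_Icc.2 ⟨hm, by omega⟩)]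
  · rw [ha m hm le_rfl, hb (m + 1) (by omega) (by omega)]
  · intro t ht htm
    rw [mem_Icc] at ht
    rcases Nat.lt_or_gt_of_ne htm with hlt | hgt
    · rw [ha t ht.1 hlt.le, ha (t + 1) (by omega) hlt, hD]
    · rw [hb t hgt (by omega), hb (t + 1) (by omega) (by omega), hD]

theorem smul_sum_Icc_two_blocks_eq_midpoint [AddCommGroup α] [Module ℝ α]
    (hm : 0 < m) (ha : ∀ t, 1 ≤ t → t ≤ m → x t = a) (hb : ∀ t, m < t → t ≤ m + m → x t = b) :
    ((m + m : ℕ) : ℝ)⁻¹ • ∑ t ∈ Icc 1 (m + m), x t = midpoint ℝ a b := by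
  have hsum : ∑ t ∈ Icc 1 (m + m), x t = m • a + m • b := sum_Icc_two_blocks x id ha hb
  rw [hsum, midpoint_eq_smul_add, ← smul_add,
    ← Nat.cast_smul_eq_nsmul ℝ, smul_smul]
  congr 1
  push_cast
  field_simp
  norm_num

theorem sum_sq_norm_sub_midpoint_two_blocks [SeminormedAddCommGroup α] [NormedSpace ℝ α]
    (ha : ∀ t, 1 ≤ t → t ≤ m → x t = a)
    (hb : ∀ t, m < t → t ≤ m + m → x t = b) :
    ∑ t ∈ Icc 1 (m + m), ‖x t - midpoint ℝ a b‖ ^ 2 = ((m + m : ℕ) : ℝ) / 4 * ‖a - b‖ ^ 2 := by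
  rw [sum_Icc_two_blocks x (fun v => ‖v - midpoint ℝ a b‖ ^ 2) ha hb]
  simp only [← dist_eq_norm, dist_left_midpoint, dist_right_midpoint, Real.norm_ofNat, nsmul_eq_mul]
  push_cast
  ring

end TwoBlocks

/-- For the two-block sequence (`f` for the first half, `g` for the second half),
the total variation equals `(T/4)‖f - g‖²` while the sequential variation equals
`‖f - g‖²`. -/
theorem total_vs_sequential_example {d T : ℕ} (hT : 0 < T) (hTeven : Even T)
    (f g : Euc d) (fs : ℕ → Euc d)
    (hfs1 : ∀ t, 1 ≤ t → t ≤ T / 2 → fs t = f)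
    (hfs2 : ∀ t, T / 2 < t → t ≤ T → fs t = g)
    (μ : Euc d) (hμ : μ = ((T : ℝ))⁻¹ • ∑ t ∈ Finset.Icc 1 T, fs t) :
    (∑ t ∈ Finset.Icc 1 T, ‖fs t - μ‖ ^ 2 = (T : ℝ) / 4 * ‖f - g‖ ^ 2) ∧
      (∑ t ∈ Finset.Icc 1 (T - 1), ‖fs (t + 1) - fs t‖ ^ 2 = ‖f - g‖ ^ 2) := by
  obtain ⟨m, rfl⟩ := hTeven
  have hhalf : (m + m) / 2 = m := by omega
  rw [hhalf] at hfs1 hfs2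
  have hm : 0 < m := by omega
  rw [hμ, smul_sum_Icc_two_blocks_eq_midpoint fs hm hfs1 hfs2]
  refine ⟨sum_sq_norm_sub_midpoint_two_blocks fs hfs1 hfs2, ?_⟩
  rw [sum_Icc_succ_two_blocks fs (fun u v => ‖v - u‖ ^ 2) (by simp) hm hm hfs1 hfs2, norm_sub_rev]
end
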